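/- Let Q be a finitely generated group with word metric d, let μ: Q³ → Q be any map, and let φ ∈ Aut(Q) satisfy sup_{x,y,z ∈ Q} d(φ(μ(x,y,z)), μ(φ(x),φ(y),φ(z))) ≤ C for some constant C ≥ 0. Then there exists a constant C' such that d(μ(x,y,z), Fix φ) ≤ C' for all x,y,z ∈ Fix φ. In other words, Fix φ is an approximate μ-subalgebra of Q. -/

import Mathlib

/-- The word length of `g` with respect to a generating set `S`: the least
length of a word in `S ∪ S⁻¹` representing `g`. -/
noncomputable def wordLength {G : Type*} [Group G] (S : Set G) (g : G) : ℕ :=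
  sInf {n : ℕ | ∃ l : List G, l.length = n ∧ (∀ x ∈ l, x ∈ S ∨ x⁻¹ ∈ S) ∧ l.prod = g}

/-- The left-invariant word metric `d(a,b) = |a⁻¹ b|_S`. -/
noncomputable def wordDist {G : Type*} [Group G] (S : Set G) (a b : G) : ℕ :=
  wordLength S (a⁻¹ * b)

/-- The word distance from `g` to the fixed subgroup `Fix φ`. -/
noncomputable def distToFix {G : Type*} [Group G] (S : Set G) (φ : G ≃* G) (g : G) : ℕ :=
  sInf {n : ℕ | ∃ h : G, φ h = h ∧ wordDist S g h = n}

/-!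
The distance from `g` to `Fix φ` only depends on the displacement `(φ g)⁻¹ * g`: if `g` and `g'`
have the same displacement then `g' * g⁻¹` is fixed by `φ`, and left multiplication by it carries
`Fix φ` onto itself while preserving distances. A bound `d(g, φ g) ≤ C` confines the displacement
to a ball of radius `C`, which is finite, so `d(g, Fix φ)` takes only finitely many values on such
`g`. For `g = μ(x, y, z)` with `x, y, z ∈ Fix φ` the hypothesis gives exactly such a bound.
-/

open scoped Pointwise

lemma list_prod_mem_pow {M : Type*} [Monoid M] [DecidableEq M] {s : Finset M} :
    ∀ {l : List M}, (∀ x ∈ l, x ∈ s) → l.prod ∈ s ^ l.length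
  | [], _ => by simp
  | x :: l, h => by
    rw [List.prod_cons, List.length_cons, pow_succ']
    exact Finset.mul_mem_mul (h x List.mem_cons_self)
      (list_prod_mem_pow fun y hy => h y (List.mem_cons_of_mem x hy))

section

variable {G : Type*} [Group G]

lemma exists_list_length_eq_wordLength {S : Set G} (hgen : Subgroup.closure S = ⊤) (g : G) :
    ∃ l : List G, l.length = wordLength S g ∧ (∀ x ∈ l, x ∈ S ∨ x⁻¹ ∈ S) ∧ l.prod = g := by
  have hg : g ∈ Submonoid.closure (S ∪ S⁻¹) := by
    rw [← Subgroup.closure_toSubmonoid, hgen]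
    trivial
  obtain ⟨l, hl, hprod⟩ := Submonoid.exists_list_of_mem_closure hg
  exact Nat.sInf_mem (s := {n : ℕ | ∃ l : List G, l.length = n ∧
    (∀ x ∈ l, x ∈ S ∨ x⁻¹ ∈ S) ∧ l.prod = g}) ⟨l.length, l, rfl, fun x hx => by simpa using hl x hx,
    hprod⟩

lemma finite_setOf_wordLength_le {S : Finset G} (hgen : Subgroup.closure (S : Set G) = ⊤)
    (C : ℕ) : {g : G | wordLength (S : Set G) g ≤ C}.Finite := by
  classical
  refine ((Finset.range (C + 1)).biUnion ((S ∪ S⁻¹) ^ ·)).finite_toSet.subset fun g hg => ?_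
  obtain ⟨l, hlen, hl, rfl⟩ := exists_list_length_eq_wordLength hgen g
  have hmem : ∀ x ∈ l, x ∈ S ∪ S⁻¹ := fun x hx => by
    simpa only [Finset.mem_union, Finset.mem_inv', Finset.mem_coe] using hl x hx
  have hlen_le : l.length < C + 1 := by rw [hlen]; exact Nat.lt_succ_of_le hg
  exact Finset.mem_biUnion.2 ⟨l.length, Finset.mem_range.2 hlen_le, list_prod_mem_pow hmem⟩

lemma distToFix_le_of_inv_mul_eq (S : Set G) (φ : G ≃* G) {g g' : G}
    (h : (φ g)⁻¹ * g = (φ g')⁻¹ * g') : distToFix S φ g' ≤ distToFix S φ g := by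
  have hquot : g' * g⁻¹ = φ g' * (φ g)⁻¹ :=
    calc g' * g⁻¹ = φ g' * ((φ g')⁻¹ * g') * g⁻¹ := by group
      _ = φ g' * ((φ g)⁻¹ * g) * g⁻¹ := by rw [h]
      _ = φ g' * (φ g)⁻¹ := by group
  have hfix : φ (g' * g⁻¹) = g' * g⁻¹ := by rw [map_mul, map_inv, hquot]
  obtain ⟨k, hk, hdist⟩ := Nat.sInf_mem (⟨_, 1, map_one φ, rfl⟩ :
    {n : ℕ | ∃ k : G, φ k = k ∧ wordDist S g k = n}.Nonempty)
  refine Nat.sInf_le ⟨g' * g⁻¹ * k, by rw [map_mul, hfix, hk], ?_⟩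
  rw [distToFix, ← hdist, wordDist, wordDist]
  group

lemma exists_distToFix_le_of_wordDist_le {S : Finset G}
    (hgen : Subgroup.closure (S : Set G) = ⊤) (φ : G ≃* G) (C : ℕ) :
    ∃ C' : ℕ, ∀ g : G, wordDist (S : Set G) (φ g) g ≤ C → distToFix (S : Set G) φ g ≤ C' := by
  set δ : G → G := fun g => (φ g)⁻¹ * g
  set f : G → ℕ := fun v => distToFix (S : Set G) φ (Function.invFun δ v)
  obtain ⟨C', hC'⟩ := ((finite_setOf_wordLength_le hgen C).image f).bddAbove
  refine ⟨C', fun g hg => ?_⟩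
  calc distToFix (S : Set G) φ g
      ≤ f (δ g) := distToFix_le_of_inv_mul_eq _ φ <| Function.invFun_eq (f := δ) ⟨g, rfl⟩
    _ ≤ C' := hC' ⟨δ g, hg, rfl⟩

end

/-- if `φ` coarsely preserves an arbitrary ternary operation `μ`
(up to a uniform constant `C` in the word metric), then the fixed subgroup of
`φ` is an approximate `μ`-subalgebra: there is `C'` bounding the distance from
`μ(x,y,z)` to `Fix φ` for all `x, y, z ∈ Fix φ`. -/
theorem stmt12 {G : Type*} [Group G] (S : Finset G)
    (hgen : Subgroup.closure (S : Set G) = ⊤)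
    (μ : G → G → G → G) (φ : G ≃* G) (C : ℕ)
    (hC : ∀ x y z : G,
      wordDist (S : Set G) (φ (μ x y z)) (μ (φ x) (φ y) (φ z)) ≤ C) :
    ∃ C' : ℕ, ∀ x y z : G, φ x = x → φ y = y → φ z = z →
      distToFix (S : Set G) φ (μ x y z) ≤ C' := by
  obtain ⟨C', hC'⟩ := exists_distToFix_le_of_wordDist_le hgen φ C
  refine ⟨C', fun x y z hx hy hz => hC' _ ?_⟩
  simpa only [hx, hy, hz] using hC x y z
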